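/- Let c ∈ ℝ with c ≠ 0, and let u ∈ C²_b(ℝ) solve -c u' = u'' + μ u(1 - φ*u) on ℝ, where φ satisfies the standing kernel assumptions. If μ √m₂ ‖u‖_∞ < |c|, then u'(x) → 0 as x → ±∞. -/

import Mathlib

open MeasureTheory Filter Set
open scoped NNReal Topology Interval

/-!
Multiplying the equation by `u'` and integrating over `[a, b]`, the energy
`u'² / 2 + μ (u² / 2 - u³ / 3)` turns it into
`c ∫ₐᵇ u'² = (boundary terms) - μ ∫ₐᵇ u u' (u - φ * u)`.
Writing `u x - u (x - y)` as the integral of `u'` over a window of length `|y|` and using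
`2 |u'(x) u'(x - s)| ≤ u'(x)² + u'(x - s)²`, the nonlocal term is at most
`M (m₁ ∫ₐᵇ u'² + m₂ ‖u'‖∞²)`. As `m₁ ≤ √m₂`, the hypothesis gives `|c| - μ M m₁ > 0`, so `∫ₐᵇ u'²`
is bounded independently of `a ≤ b`; since `u'` is Lipschitz, this forces `u' → 0` at `±∞`.
-/

theorem LipschitzWith.mul_sq_div_two_le_intervalIntegral_sq {f : ℝ → ℝ} {K : ℝ≥0}
    (hf : LipschitzWith K f) {x δ : ℝ} (hδ : 0 ≤ δ) (hKδ : 2 * K * δ ≤ |f x|) :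
    δ * f x ^ 2 / 2 ≤ ∫ t in x - δ..x + δ, f t ^ 2 := by
  have hclose : ∀ t ∈ Icc (x - δ) (x + δ), f x ^ 2 / 4 ≤ f t ^ 2 := by
    intro t ht
    have hdist : |f t - f x| ≤ K * δ := by
      have := hf.dist_le_mul t x
      rw [Real.dist_eq, Real.dist_eq] at this
      exact this.trans (mul_le_mul_of_nonneg_left (abs_sub_le_iff.2 ⟨by linarith [ht.2],
        by linarith [ht.1]⟩) K.2)
    have : |f x| / 2 ≤ |f t| := by
      linarith [abs_sub_abs_le_abs_sub (f x) (f t), abs_sub_comm (f t) (f x)]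
    nlinarith [sq_abs (f x), sq_abs (f t), abs_nonneg (f x)]
  calc δ * f x ^ 2 / 2 = ∫ _ in x - δ..x + δ, f x ^ 2 / 4 := by
        rw [intervalIntegral.integral_const, smul_eq_mul]; ring
    _ ≤ ∫ t in x - δ..x + δ, f t ^ 2 :=
        intervalIntegral.integral_mono_on (by linarith) intervalIntegrable_const
          ((hf.continuous.pow 2).intervalIntegrable _ _) hclose

theorem LipschitzWith.tendsto_atTop_zero_of_intervalIntegral_sq_le {f : ℝ → ℝ} {K : ℝ≥0} {L : ℝ}
    (hf : LipschitzWith K f) (hL : ∀ a b, a ≤ b → ∫ x in a..b, f x ^ 2 ≤ L) :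
    Tendsto f atTop (𝓝 0) := by
  have hsq : Continuous fun x => f x ^ 2 := hf.continuous.pow 2
  set P : ℝ → ℝ := fun x => ∫ t in (0 : ℝ)..x, f t ^ 2
  have hP : ∀ a b, P b - P a = ∫ t in a..b, f t ^ 2 := fun a b =>
    intervalIntegral.integral_interval_sub_left (hsq.intervalIntegrable _ _)
      (hsq.intervalIntegrable _ _)
  have hmono : Monotone P := fun a b hab =>
    sub_nonneg.1 (hP a b ▸ intervalIntegral.integral_nonneg hab fun _ _ => sq_nonneg _)
  have hbdd : BddAbove (range P) := ⟨L, forall_mem_range.2 fun x =>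
    (hmono (le_max_left x 0)).trans (by simpa [P] using hL 0 (max x 0) (le_max_right x 0))⟩
  rw [NormedAddGroup.tendsto_nhds_zero]
  intro ε hε
  set δ := ε / (2 * (K + 1))
  have hδ : 0 < δ := by positivity
  have hKδ : 2 * K * δ ≤ ε := by
    calc 2 * K * δ ≤ 2 * (K + 1) * δ := by gcongr; linarith
      _ = ε := by simp only [δ]; field_simp
  have hwindow : Tendsto (fun x => P (x + δ) - P (x - δ)) atTop (𝓝 0) := by
    have hlim := tendsto_atTop_ciSup hmono hbdd
    simpa [sub_eq_add_neg] using (hlim.comp (tendsto_atTop_add_const_right _ δ tendsto_id)).sub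
      (hlim.comp (tendsto_atTop_add_const_right _ (-δ) tendsto_id))
  filter_upwards [hwindow.eventually_lt_const (by positivity : 0 < δ * ε ^ 2 / 2)] with x hx
  by_contra! hfx
  rw [Real.norm_eq_abs] at hfx
  have hlow := hf.mul_sq_div_two_le_intervalIntegral_sq hδ.le (hKδ.trans hfx)
  rw [← hP] at hlow
  have hεfx : ε ^ 2 ≤ f x ^ 2 := by nlinarith [sq_abs (f x)]
  nlinarith [mul_le_mul_of_nonneg_left hεfx hδ.le]

theorem LipschitzWith.tendsto_atBot_zero_of_intervalIntegral_sq_le {f : ℝ → ℝ} {K : ℝ≥0} {L : ℝ}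
    (hf : LipschitzWith K f) (hL : ∀ a b, a ≤ b → ∫ x in a..b, f x ^ 2 ≤ L) :
    Tendsto f atBot (𝓝 0) := by
  have hneg : Tendsto (fun x => f (-x)) atTop (𝓝 0) := by
    refine (hf.comp LipschitzWith.id.neg).tendsto_atTop_zero_of_intervalIntegral_sq_le
      (L := L) fun a b hab => ?_
    simpa using (intervalIntegral.integral_comp_neg (fun t => f t ^ 2) (a := a) (b := b)).trans_le
      (hL (-b) (-a) (neg_le_neg hab))
  simpa [Function.comp_def] using hneg.comp tendsto_neg_atBot_atTop

section Shift

variable {u g : ℝ → ℝ} {K : ℝ}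

theorem intervalIntegral_sq_comp_sub_le (hg : Continuous g) (hK : ∀ x, |g x| ≤ K) (a b s : ℝ) :
    ∫ x in a..b, g (x - s) ^ 2 ≤ (∫ x in a..b, g x ^ 2) + 2 * |s| * K ^ 2 := by
  have hint : ∀ p q, IntervalIntegrable (fun x => g x ^ 2) volume p q := fun p q =>
    (hg.pow 2).intervalIntegrable p q
  have hend : ∀ p, |∫ x in p - s..p, g x ^ 2| ≤ K ^ 2 * |s| := fun p => by
    simpa using intervalIntegral.norm_integral_le_of_norm_le_const (a := p - s) (b := p)
      (f := fun x => g x ^ 2) (C := K ^ 2) fun x _ => by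
        simpa [abs_pow] using pow_le_pow_left₀ (abs_nonneg _) (hK x) 2
  have hshift := intervalIntegral.integral_interval_sub_interval_comm (hint (a - s) (b - s))
    (hint a b) (hint (a - s) a)
  rw [intervalIntegral.integral_comp_sub_right (fun x => g x ^ 2)]
  linarith [abs_le.1 (hend a), abs_le.1 (hend b)]

theorem intervalIntegral_abs_mul_abs_comp_sub_le (hg : Continuous g) (hK : ∀ x, |g x| ≤ K)
    {a b : ℝ} (hab : a ≤ b) (s : ℝ) :
    ∫ x in a..b, |g x| * |g (x - s)| ≤ (∫ x in a..b, g x ^ 2) + |s| * K ^ 2 := by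
  have hgs : Continuous fun x => g (x - s) := hg.comp (continuous_sub_right s)
  calc ∫ x in a..b, |g x| * |g (x - s)|
      ≤ ∫ x in a..b, (g x ^ 2 + g (x - s) ^ 2) / 2 :=
        intervalIntegral.integral_mono_on hab ((hg.abs.mul hgs.abs).intervalIntegrable _ _)
          (((hg.pow 2).add (hgs.pow 2)).div_const 2 |>.intervalIntegrable _ _) fun x _ => by
            nlinarith [sq_nonneg (|g x| - |g (x - s)|), sq_abs (g x), sq_abs (g (x - s))]
    _ = ((∫ x in a..b, g x ^ 2) + ∫ x in a..b, g (x - s) ^ 2) / 2 := by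
        rw [intervalIntegral.integral_div, intervalIntegral.integral_add (f := fun x => g x ^ 2)
          (g := fun x => g (x - s) ^ 2) ((hg.pow 2).intervalIntegrable a b)
          ((hgs.pow 2).intervalIntegrable a b)]
    _ ≤ (∫ x in a..b, g x ^ 2) + |s| * K ^ 2 := by
        linarith [intervalIntegral_sq_comp_sub_le hg hK a b s]

theorem abs_sub_comp_sub_le_integral_uIoc (hu : ∀ x, HasDerivAt u (g x) x) (hg : Continuous g)
    (x y : ℝ) : |u x - u (x - y)| ≤ ∫ s in Ι 0 y, |g (x - s)| := by
  have hftc : ∫ s in (0 : ℝ)..y, g (x - s) = u x - u (x - y) := by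
    rw [intervalIntegral.integral_comp_sub_left g x, sub_zero,
      intervalIntegral.integral_eq_sub_of_hasDerivAt (fun t _ => hu t) (hg.intervalIntegrable _ _)]
  simpa [hftc] using intervalIntegral.norm_integral_le_integral_norm_uIoc
    (f := fun s => g (x - s)) (a := 0) (b := y) (μ := volume)

theorem intervalIntegral_abs_mul_abs_sub_comp_sub_le (hu : ∀ x, HasDerivAt u (g x) x)
    (hg : Continuous g) (hK : ∀ x, |g x| ≤ K) {a b : ℝ} (hab : a ≤ b) (y : ℝ) :
    ∫ x in a..b, |g x| * |u x - u (x - y)| ≤ |y| * ((∫ x in a..b, g x ^ 2) + |y| * K ^ 2) := by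
  set T := ∫ x in a..b, g x ^ 2
  have hK0 : 0 ≤ K := (abs_nonneg _).trans (hK 0)
  have : IsFiniteMeasure (volume.restrict (Ι 0 y)) := isFiniteMeasure_restrict.2 (by simp)
  set ψ : ℝ × ℝ → ℝ := fun p => |g p.1| * |g (p.1 - p.2)|
  have hψ : Integrable ψ ((volume.restrict (Ioc a b)).prod (volume.restrict (Ι 0 y))) := by
    refine (integrable_const (K * K)).mono'
      ((hg.comp continuous_fst).abs.mul
        (hg.comp (continuous_fst.sub continuous_snd)).abs).aestronglyMeasurable
      (Eventually.of_forall fun p => ?_)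
    rw [Real.norm_eq_abs, abs_of_nonneg (by positivity)]
    exact mul_le_mul (hK _) (hK _) (abs_nonneg _) hK0
  have hinner : ∀ s ∈ Ι 0 y, ∫ x in Ioc a b, ψ (x, s) ≤ T + |y| * K ^ 2 := by
    intro s hs
    have hsy : |s| ≤ |y| := by simpa using abs_sub_left_of_mem_uIcc (uIoc_subset_uIcc hs)
    rw [← intervalIntegral.integral_of_le hab]
    exact (intervalIntegral_abs_mul_abs_comp_sub_le hg hK hab s).trans (by gcongr)
  calc ∫ x in a..b, |g x| * |u x - u (x - y)|
      ≤ ∫ x in Ioc a b, ∫ s in Ι 0 y, ψ (x, s) := by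
        rw [intervalIntegral.integral_of_le hab]
        refine integral_mono_of_nonneg (Eventually.of_forall fun x => by positivity)
          hψ.integral_prod_left (Eventually.of_forall fun x => ?_)
        simp only [ψ]
        rw [integral_const_mul]
        exact mul_le_mul_of_nonneg_left (abs_sub_comp_sub_le_integral_uIoc hu hg x y)
          (abs_nonneg _)
    _ = ∫ s in Ι 0 y, ∫ x in Ioc a b, ψ (x, s) := integral_integral_swap hψ
    _ ≤ ∫ s in Ι 0 y, (T + |y| * K ^ 2) :=
        setIntegral_mono_on hψ.integral_prod_right (integrableOn_const (by simp))
          measurableSet_uIoc hinner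
    _ = |y| * (T + |y| * K ^ 2) := by
        simp [measureReal_def]

end Shift

section Convolution

variable {u φ : ℝ → ℝ} {M : ℝ}

theorem continuous_integral_comp_sub_mul (hu : Continuous u) (hM : ∀ x, |u x| ≤ M)
    (hφ : Integrable φ) : Continuous fun x => ∫ y, u (x - y) * φ y :=
  continuous_of_dominated
    (fun x => (hu.comp (continuous_sub_left x)).aestronglyMeasurable.mul
      hφ.aestronglyMeasurable)
    (fun x => Eventually.of_forall fun y => by
      rw [norm_mul]; exact mul_le_mul_of_nonneg_right (hM _) (norm_nonneg _))
    (hφ.norm.const_mul M)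
    (Eventually.of_forall fun y => (hu.comp (continuous_sub_right y)).mul continuous_const)

theorem abs_sub_integral_comp_sub_mul_le (hu : Continuous u) (hM : ∀ x, |u x| ≤ M)
    (hφ0 : ∀ z, 0 ≤ φ z) (hφ : Integrable φ) (hφ1 : ∫ z, φ z = 1) (x : ℝ) :
    |u x - ∫ y, u (x - y) * φ y| ≤ ∫ y, |u x - u (x - y)| * φ y := by
  have hshift : Integrable fun y => u (x - y) * φ y :=
    hφ.bdd_mul (hu.comp (continuous_sub_left x)).aestronglyMeasurable
      (Eventually.of_forall fun _ => hM _)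
  have hdiff : u x - ∫ y, u (x - y) * φ y = ∫ y, (u x - u (x - y)) * φ y := by
    simp_rw [sub_mul]
    rw [integral_sub (hφ.const_mul _) hshift, integral_const_mul, hφ1, mul_one]
  rw [hdiff]
  refine (abs_integral_le_integral_abs).trans_eq (integral_congr_ae (Eventually.of_forall
    fun y => ?_))
  simp [abs_mul, abs_of_nonneg (hφ0 y)]

theorem sq_integral_abs_mul_le_integral_sq_mul (hφ0 : ∀ z, 0 ≤ φ z) (hφ : Integrable φ)
    (hφ1 : ∫ z, φ z = 1) (hφm1 : Integrable fun z => |z| * φ z)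
    (hφm2 : Integrable fun z => z ^ 2 * φ z) :
    (∫ z, |z| * φ z) ^ 2 ≤ ∫ z, z ^ 2 * φ z := by
  set m := ∫ z, |z| * φ z
  have hvar : 0 ≤ ∫ z, (|z| - m) ^ 2 * φ z :=
    integral_nonneg fun z => mul_nonneg (sq_nonneg _) (hφ0 z)
  have hexp : ∀ z, (|z| - m) ^ 2 * φ z = z ^ 2 * φ z - 2 * m * (|z| * φ z) + m ^ 2 * φ z :=
    fun z => by rw [← sq_abs z]; ring
  simp_rw [hexp] at hvar
  rw [integral_add (f := fun z => z ^ 2 * φ z - 2 * m * (|z| * φ z))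
    (hφm2.sub (hφm1.const_mul _)) (hφ.const_mul _), integral_sub hφm2
    (hφm1.const_mul _), integral_const_mul, integral_const_mul, hφ1] at hvar
  linarith

theorem intervalIntegral_abs_mul_abs_sub_convolution_le {g : ℝ → ℝ} {K : ℝ}
    (hu : ∀ x, HasDerivAt u (g x) x) (hg : Continuous g) (hM : ∀ x, |u x| ≤ M)
    (hK : ∀ x, |g x| ≤ K) (hφ0 : ∀ z, 0 ≤ φ z) (hφ : Integrable φ) (hφ1 : ∫ z, φ z = 1)
    (hφm1 : Integrable fun z => |z| * φ z) (hφm2 : Integrable fun z => z ^ 2 * φ z)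
    {a b : ℝ} (hab : a ≤ b) :
    ∫ x in a..b, |g x| * |u x - ∫ y, u (x - y) * φ y|
      ≤ (∫ z, |z| * φ z) * (∫ x in a..b, g x ^ 2) + (∫ z, z ^ 2 * φ z) * K ^ 2 := by
  set T := ∫ x in a..b, g x ^ 2
  have hucont : Continuous u := continuous_iff_continuousAt.2 fun x => (hu x).continuousAt
  have hK0 : 0 ≤ K := (abs_nonneg _).trans (hK 0)
  set ψ : ℝ × ℝ → ℝ := fun p => |g p.1| * |u p.1 - u (p.1 - p.2)| * φ p.2
  have hψ : Integrable ψ ((volume.restrict (Ioc a b)).prod volume) := by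
    refine ((integrable_const (K * (2 * M))).mul_prod hφ).mono'
      (((hg.comp continuous_fst).abs.mul ((hucont.comp continuous_fst).sub
        (hucont.comp (continuous_fst.sub continuous_snd))).abs).aestronglyMeasurable.mul
        hφ.aestronglyMeasurable.comp_snd) (Eventually.of_forall fun p => ?_)
    have hΔ : |u p.1 - u (p.1 - p.2)| ≤ 2 * M :=
      (abs_sub _ _).trans (by linarith [hM p.1, hM (p.1 - p.2)])
    rw [Real.norm_eq_abs, abs_of_nonneg (mul_nonneg (by positivity) (hφ0 _))]
    exact mul_le_mul_of_nonneg_right (mul_le_mul (hK _) hΔ (abs_nonneg _) hK0) (hφ0 _)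
  have hinner : ∀ y, ∫ x in Ioc a b, ψ (x, y) ≤ |y| * φ y * T + y ^ 2 * φ y * K ^ 2 := by
    intro y
    simp only [ψ]
    rw [integral_mul_const, ← intervalIntegral.integral_of_le hab]
    have := mul_le_mul_of_nonneg_right
      (intervalIntegral_abs_mul_abs_sub_comp_sub_le hu hg hK hab y) (hφ0 y)
    rw [← sq_abs y]
    linarith
  calc ∫ x in a..b, |g x| * |u x - ∫ y, u (x - y) * φ y|
      ≤ ∫ x in Ioc a b, ∫ y, ψ (x, y) := by
        rw [intervalIntegral.integral_of_le hab]
        refine integral_mono_of_nonneg (Eventually.of_forall fun x => by positivity)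
          hψ.integral_prod_left (Eventually.of_forall fun x => ?_)
        simp only [ψ, mul_assoc]
        rw [integral_const_mul]
        exact mul_le_mul_of_nonneg_left
          (abs_sub_integral_comp_sub_mul_le hucont hM hφ0 hφ hφ1 x) (abs_nonneg _)
    _ = ∫ y, ∫ x in Ioc a b, ψ (x, y) := integral_integral_swap hψ
    _ ≤ ∫ y, (|y| * φ y * T + y ^ 2 * φ y * K ^ 2) :=
        integral_mono hψ.integral_prod_right
          ((hφm1.mul_const T).add (hφm2.mul_const _)) hinner
    _ = (∫ z, |z| * φ z) * T + (∫ z, z ^ 2 * φ z) * K ^ 2 := by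
        rw [integral_add (hφm1.mul_const T) (hφm2.mul_const _), integral_mul_const,
          integral_mul_const]

theorem abs_intervalIntegral_mul_mul_sub_convolution_le {g : ℝ → ℝ} {K : ℝ}
    (hu : ∀ x, HasDerivAt u (g x) x) (hg : Continuous g) (hM : ∀ x, |u x| ≤ M)
    (hK : ∀ x, |g x| ≤ K) (hφ0 : ∀ z, 0 ≤ φ z) (hφ : Integrable φ) (hφ1 : ∫ z, φ z = 1)
    (hφm1 : Integrable fun z => |z| * φ z) (hφm2 : Integrable fun z => z ^ 2 * φ z)
    {a b : ℝ} (hab : a ≤ b) :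
    |∫ x in a..b, u x * (g x * (u x - ∫ y, u (x - y) * φ y))|
      ≤ M * ((∫ z, |z| * φ z) * (∫ x in a..b, g x ^ 2) + (∫ z, z ^ 2 * φ z) * K ^ 2) := by
  have hucont : Continuous u := continuous_iff_continuousAt.2 fun x => (hu x).continuousAt
  have hC := continuous_integral_comp_sub_mul hucont hM hφ
  calc |∫ x in a..b, u x * (g x * (u x - ∫ y, u (x - y) * φ y))|
      ≤ ∫ x in a..b, |u x * (g x * (u x - ∫ y, u (x - y) * φ y))| :=
        intervalIntegral.abs_integral_le_integral_abs hab
    _ ≤ ∫ x in a..b, M * (|g x| * |u x - ∫ y, u (x - y) * φ y|) :=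
        intervalIntegral.integral_mono_on hab (Continuous.intervalIntegrable (by fun_prop) a b)
          (Continuous.intervalIntegrable (by fun_prop) a b) fun x _ => by
            rw [abs_mul, abs_mul]
            exact mul_le_mul_of_nonneg_right (hM x) (by positivity)
    _ = M * ∫ x in a..b, |g x| * |u x - ∫ y, u (x - y) * φ y| :=
        intervalIntegral.integral_const_mul _ _
    _ ≤ _ := mul_le_mul_of_nonneg_left (intervalIntegral_abs_mul_abs_sub_convolution_le
        hu hg hM hK hφ0 hφ hφ1 hφm1 hφm2 hab) ((abs_nonneg _).trans (hM 0))

end Convolution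

section TravellingWave

variable {φ u : ℝ → ℝ} {c μ M M' : ℝ}

noncomputable def travellingWaveEnergy (μ p q : ℝ) : ℝ := p ^ 2 / 2 + μ * (q ^ 2 / 2 - q ^ 3 / 3)

theorem abs_travellingWaveEnergy_le (hμ : 0 ≤ μ) {p q : ℝ} (hp : |p| ≤ M') (hq : |q| ≤ M) :
    |travellingWaveEnergy μ p q| ≤ M' ^ 2 / 2 + μ * (M ^ 2 / 2 + M ^ 3 / 3) := by
  have hp2 : p ^ 2 ≤ M' ^ 2 := by simpa [sq_abs] using pow_le_pow_left₀ (abs_nonneg _) hp 2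
  have hpoly : |q ^ 2 / 2 - q ^ 3 / 3| ≤ M ^ 2 / 2 + M ^ 3 / 3 := by
    have := abs_sub (q ^ 2 / 2) (q ^ 3 / 3)
    simp only [abs_div, abs_pow, abs_two, abs_of_pos (three_pos : (0 : ℝ) < 3)] at this
    linarith [pow_le_pow_left₀ (abs_nonneg _) hq 2, pow_le_pow_left₀ (abs_nonneg _) hq 3]
  calc |travellingWaveEnergy μ p q| ≤ p ^ 2 / 2 + μ * |q ^ 2 / 2 - q ^ 3 / 3| := by
        refine (abs_add_le _ _).trans_eq ?_
        rw [abs_of_nonneg (by positivity), abs_mul, abs_of_nonneg hμ]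
    _ ≤ M' ^ 2 / 2 + μ * (M ^ 2 / 2 + M ^ 3 / 3) := by
        linarith [mul_le_mul_of_nonneg_left hpoly hμ]

theorem hasDerivAt_travellingWaveEnergy {C : ℝ → ℝ} {x : ℝ} (hu : DifferentiableAt ℝ u x)
    (hu' : DifferentiableAt ℝ (deriv u) x)
    (heq : -(c * deriv u x) = deriv (deriv u) x + μ * u x * (1 - C x)) :
    HasDerivAt (fun x => travellingWaveEnergy μ (deriv u x) (u x))
      (-(c * deriv u x ^ 2) - μ * (u x * (deriv u x * (u x - C x)))) x := by
  refine (((hu'.hasDerivAt.pow 2).div_const 2).add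
    ((((hu.hasDerivAt.pow 2).div_const 2).sub
      ((hu.hasDerivAt.pow 3).div_const 3)).const_mul μ)).congr_deriv ?_
  simp only [Nat.cast_ofNat]
  linear_combination (-(deriv u x)) * heq

theorem intervalIntegral_deriv_sq_le (hu : Differentiable ℝ u)
    (hu' : Differentiable ℝ (deriv u)) (hμ : 0 ≤ μ) (hM : ∀ x, |u x| ≤ M)
    (hM' : ∀ x, |deriv u x| ≤ M') (hφ0 : ∀ z, 0 ≤ φ z) (hφ : Integrable φ) (hφ1 : ∫ z, φ z = 1)
    (hφm1 : Integrable fun z => |z| * φ z) (hφm2 : Integrable fun z => z ^ 2 * φ z)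
    (heq : ∀ x, -(c * deriv u x) = deriv (deriv u) x + μ * u x * (1 - ∫ y, u (x - y) * φ y))
    {a b : ℝ} (hab : a ≤ b) :
    (|c| - μ * M * ∫ z, |z| * φ z) * ∫ x in a..b, deriv u x ^ 2
      ≤ M' ^ 2 + μ * (M ^ 2 + M ^ 3) + μ * M * (∫ z, z ^ 2 * φ z) * M' ^ 2 := by
  set C := fun x => ∫ y, u (x - y) * φ y
  have hC : Continuous C := continuous_integral_comp_sub_mul hu.continuous hM hφ
  have hucont := hu.continuous
  have hg := hu'.continuous
  have hsq : IntervalIntegrable (fun x => -(c * deriv u x ^ 2)) volume a b :=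
    Continuous.intervalIntegrable (by fun_prop) a b
  have hcubic : IntervalIntegrable (fun x => μ * (u x * (deriv u x * (u x - C x)))) volume a b :=
    Continuous.intervalIntegrable (by fun_prop) a b
  have hFTC := intervalIntegral.integral_eq_sub_of_hasDerivAt
    (fun x _ => hasDerivAt_travellingWaveEnergy (C := C) (hu x) (hu' x) (heq x)) (hsq.sub hcubic)
  rw [intervalIntegral.integral_sub hsq hcubic, intervalIntegral.integral_neg,
    intervalIntegral.integral_const_mul, intervalIntegral.integral_const_mul] at hFTC
  set T := ∫ x in a..b, deriv u x ^ 2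
  set F := ∫ x in a..b, u x * (deriv u x * (u x - C x))
  have hF : |F| ≤ M * ((∫ z, |z| * φ z) * T + (∫ z, z ^ 2 * φ z) * M' ^ 2) :=
    abs_intervalIntegral_mul_mul_sub_convolution_le (fun x => (hu x).hasDerivAt) hg hM hM'
      hφ0 hφ hφ1 hφm1 hφm2 hab
  have hcT : |c| * T ≤ M' ^ 2 + μ * (M ^ 2 + M ^ 3) + μ * |F| := by
    have hWa := abs_le.1 (abs_travellingWaveEnergy_le hμ (hM' a) (hM a))
    have hWb := abs_le.1 (abs_travellingWaveEnergy_le hμ (hM' b) (hM b))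
    have hμF := mul_le_mul_of_nonneg_left (le_abs_self F) hμ
    have hμF' := mul_le_mul_of_nonneg_left (neg_abs_le F) hμ
    have hμM := mul_nonneg hμ (pow_nonneg ((abs_nonneg _).trans (hM 0)) 3)
    have hT0 : 0 ≤ T := intervalIntegral.integral_nonneg hab fun _ _ => sq_nonneg _
    rw [← abs_of_nonneg hT0, ← abs_mul]
    exact abs_le.2 ⟨by linarith, by linarith⟩
  nlinarith [mul_le_mul_of_nonneg_left hF hμ]

end TravellingWave

theorem stmt_6_general (φ u : ℝ → ℝ) (c μ : ℝ) (hμ : 0 < μ)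
    (hφ0 : ∀ z, 0 ≤ φ z)
    (hφint : Integrable φ) (hφ1 : ∫ z, φ z = 1)
    (m₁ m₂ : ℝ)
    (hφm1 : Integrable (fun z => |z| * φ z)) (hm1 : m₁ = ∫ z, |z| * φ z)
    (hφm2 : Integrable (fun z => z ^ 2 * φ z)) (hm2 : m₂ = ∫ z, z ^ 2 * φ z)
    (hu : ContDiff ℝ 2 u)
    (M M' M'' : ℝ) (hM : ∀ x, |u x| ≤ M)
    (hM' : ∀ x, |deriv u x| ≤ M') (hM'' : ∀ x, |deriv (deriv u) x| ≤ M'')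
    (heq : ∀ x, -(c * deriv u x)
      = deriv (deriv u) x + μ * u x * (1 - ∫ y, u (x - y) * φ y))
    (hcond : μ * Real.sqrt m₂ * M < |c|) :
    Tendsto (deriv u) atTop (nhds 0) ∧ Tendsto (deriv u) atBot (nhds 0) := by
  obtain ⟨hdiff, -, hderiv⟩ := (contDiff_succ_iff_deriv (n := 1)).1 hu
  have hdiff' : Differentiable ℝ (deriv u) := hderiv.differentiable one_ne_zero
  have hM0 : 0 ≤ M := (abs_nonneg _).trans (hM 0)
  have hm : m₁ ≤ √m₂ := hm1 ▸ hm2 ▸ Real.le_sqrt_of_sq_le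
    (sq_integral_abs_mul_le_integral_sq_mul hφ0 hφint hφ1 hφm1 hφm2)
  have hgap : 0 < |c| - μ * M * m₁ := by
    nlinarith [mul_le_mul_of_nonneg_left hm (mul_nonneg hμ.le hM0)]
  have hL : ∀ a b, a ≤ b → ∫ x in a..b, deriv u x ^ 2
      ≤ (M' ^ 2 + μ * (M ^ 2 + M ^ 3) + μ * M * m₂ * M' ^ 2) / (|c| - μ * M * m₁) :=
    fun a b hab => by
      rw [le_div_iff₀' hgap]
      subst hm1 hm2
      exact intervalIntegral_deriv_sq_le hdiff hdiff' hμ.le hM hM' hφ0 hφint hφ1 hφm1 hφm2 heq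
        hab
  have hlip : LipschitzWith (Real.toNNReal M'') (deriv u) :=
    lipschitzWith_of_nnnorm_deriv_le hdiff' fun x => by
      rw [← NNReal.coe_le_coe, coe_nnnorm, Real.norm_eq_abs,
        Real.coe_toNNReal _ ((abs_nonneg _).trans (hM'' 0))]
      exact hM'' x
  exact ⟨hlip.tendsto_atTop_zero_of_intervalIntegral_sq_le hL,
    hlip.tendsto_atBot_zero_of_intervalIntegral_sq_le hL⟩

/-- For rapid waves, u'(±∞) = 0. -/
theorem stmt_6 (φ u : ℝ → ℝ) (c μ : ℝ) (hc : c ≠ 0) (hμ : 0 < μ)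
    (hφc : Continuous φ) (hφ0 : ∀ z, 0 ≤ φ z)
    (hφint : Integrable φ) (hφ1 : ∫ z, φ z = 1)
    (m₁ m₂ : ℝ)
    (hφm1 : Integrable (fun z => |z| * φ z)) (hm1 : m₁ = ∫ z, |z| * φ z)
    (hφm2 : Integrable (fun z => z ^ 2 * φ z)) (hm2 : m₂ = ∫ z, z ^ 2 * φ z)
    (hu : ContDiff ℝ 2 u)
    (M M' M'' : ℝ) (hM : ∀ x, |u x| ≤ M) (hMsup : M = ⨆ x, |u x|)
    (hM' : ∀ x, |deriv u x| ≤ M') (hM'' : ∀ x, |deriv (deriv u) x| ≤ M'')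
    (heq : ∀ x, -(c * deriv u x)
      = deriv (deriv u) x + μ * u x * (1 - ∫ y, u (x - y) * φ y))
    (hcond : μ * Real.sqrt m₂ * M < |c|) :
    Tendsto (deriv u) atTop (nhds 0) ∧ Tendsto (deriv u) atBot (nhds 0) :=
  stmt_6_general φ u c μ hμ hφ0 hφint hφ1 m₁ m₂ hφm1 hm1 hφm2 hm2 hu M M' M'' hM hM' hM'' heq hcond
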